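/- Let X be a dg algebra with a deformation retract (i, p, h) onto Y such that h satisfies the generalized Leibniz rule and h∘i = 0. Then the product on Y defined by α·β := p(i(α)·i(β)) is associative: (α·β)·γ = α·(β·γ) for all α, β, γ ∈ Y. -/

import Mathlib

/-!
Since `h ∘ i = 0` and `h` satisfies the generalized Leibniz rule, `h` kills every product
`i α · i β`, and, by the Leibniz rule for `d`, also its boundary. The homotopy formula
`i ∘ p = 1 + d h + h d` then shows that `i (p (i α · i β)) = i α · i β`, so both sides of
the associativity equation are `p` of the triple product `i α · i β · i γ` of `X`.
-/

section DescendedProduct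

variable {R X Y : Type*}

theorem map_mul_eq_zero_of_generalized_leibniz [CommSemiring R] [AddCommMonoid X] [Module R X]
    (mul : X →ₗ[R] X →ₗ[R] X) (h : X →ₗ[R] X)
    (hgen : ∀ a b : X, ∃ u v : X, h (mul a b) = mul (h a) u + mul v (h b))
    {a b : X} (ha : h a = 0) (hb : h b = 0) : h (mul a b) = 0 := by
  obtain ⟨u, v, huv⟩ := hgen a b
  simp [huv, ha, hb]

theorem apply_eq_self_of_homotopy_eq_zero [Semiring R] [AddCommMonoid X] [Module R X]
    [AddCommMonoid Y] [Module R Y] (dX h : X →ₗ[R] X) (i : Y →ₗ[R] X) (p : X →ₗ[R] Y)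
    (hip : i ∘ₗ p = LinearMap.id + dX ∘ₗ h + h ∘ₗ dX)
    {x : X} (hx : h x = 0) (hdx : h (dX x) = 0) : i (p x) = x := by
  simpa [hx, hdx] using LinearMap.congr_fun hip x

theorem homotopy_mul_inclusion_eq_zero [CommSemiring R] [AddCommMonoid X] [Module R X]
    [AddCommMonoid Y] [Module R Y] (mul : X →ₗ[R] X →ₗ[R] X) (i : Y →ₗ[R] X) (h : X →ₗ[R] X)
    (hgen : ∀ a b : X, ∃ u v : X, h (mul a b) = mul (h a) u + mul v (h b))
    (hhi : h ∘ₗ i = 0) (α β : Y) : h (mul (i α) (i β)) = 0 :=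
  map_mul_eq_zero_of_generalized_leibniz mul h hgen
    (LinearMap.congr_fun hhi α) (LinearMap.congr_fun hhi β)

theorem homotopy_differential_mul_inclusion_eq_zero [CommRing R] [AddCommGroup X] [Module R X]
    [AddCommGroup Y] [Module R Y]
    (A : ℕ → Submodule R X) (B : ℕ → Submodule R Y) [DirectSum.Decomposition B]
    (dX : X →ₗ[R] X) (dY : Y →ₗ[R] Y) (mul : X →ₗ[R] X →ₗ[R] X)
    (hLeib : ∀ m : ℕ, ∀ x ∈ A m, ∀ y : X,
      dX (mul x y) = mul (dX x) y + ((-1 : ℤ) ^ m) • mul x (dX y))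
    (i : Y →ₗ[R] X) (h : X →ₗ[R] X) (hichain : dX ∘ₗ i = i ∘ₗ dY)
    (hideg : ∀ n : ℕ, ∀ y ∈ B n, i y ∈ A n)
    (hmul : ∀ α β : Y, h (mul (i α) (i β)) = 0) (α β : Y) :
    h (dX (mul (i α) (i β))) = 0 := by
  have hd : ∀ α : Y, dX (i α) = i (dY α) := LinearMap.congr_fun hichain
  induction α using DirectSum.Decomposition.inductionOn (ℳ := B) with
  | zero => simp
  | @homogeneous n α =>
    rw [hLeib n (i α) (hideg n α α.2), map_add, map_zsmul, hd, hd, hmul, hmul, smul_zero,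
      add_zero]
  | add α α' hα hα' => simp only [map_add, LinearMap.add_apply, hα, hα', add_zero]

end DescendedProduct

theorem descended_product_associative_general {R X Y : Type*} [CommRing R]
    [AddCommGroup X] [Module R X] [AddCommGroup Y] [Module R Y]
    -- gradings of the complexes X and Y
    (A : ℕ → Submodule R X) (B : ℕ → Submodule R Y)
    [DirectSum.Decomposition B]
    -- the differentials
    (dX : X →ₗ[R] X) (dY : Y →ₗ[R] Y)
    -- the dg algebra structure on X : bilinear, unital, associative product
    -- compatible with the grading and satisfying the Leibniz rule
    (mul : X →ₗ[R] X →ₗ[R] X)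
    (hassoc : ∀ x y z : X, mul (mul x y) z = mul x (mul y z))
    (hLeib : ∀ m : ℕ, ∀ x ∈ A m, ∀ y : X,
      dX (mul x y) = mul (dX x) y + ((-1 : ℤ) ^ m) • mul x (dX y))
    -- the deformation retract (i, p, h)
    (i : Y →ₗ[R] X) (p : X →ₗ[R] Y) (h : X →ₗ[R] X)
    (hichain : dX ∘ₗ i = i ∘ₗ dY)
    (hideg : ∀ n : ℕ, ∀ y ∈ B n, i y ∈ A n)
    (hip : i ∘ₗ p = LinearMap.id + dX ∘ₗ h + h ∘ₗ dX)
    -- h satisfies the generalized Leibniz rule : h(ab) ∈ h(a)·X + X·h(b)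
    (hgen : ∀ a b : X, ∃ u v : X, h (mul a b) = mul (h a) u + mul v (h b))
    -- h ∘ i = 0
    (hhi : h ∘ₗ i = 0) :
    -- the product α·β := p (i α · i β) on Y is associative
    ∀ α β γ : Y,
      p (mul (i (p (mul (i α) (i β)))) (i γ)) =
        p (mul (i α) (i (p (mul (i β) (i γ))))) := by
  have hmul := homotopy_mul_inclusion_eq_zero mul i h hgen hhi
  have hip_mul : ∀ α β : Y, i (p (mul (i α) (i β))) = mul (i α) (i β) := fun α β =>
    apply_eq_self_of_homotopy_eq_zero dX h i p hip (hmul α β)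
      (homotopy_differential_mul_inclusion_eq_zero A B dX dY mul hLeib i h hichain hideg hmul α β)
  intro α β γ
  rw [hip_mul, hip_mul, hassoc]

theorem descended_product_associative {R X Y : Type*} [CommRing R]
    [AddCommGroup X] [Module R X] [AddCommGroup Y] [Module R Y]
    -- gradings of the complexes X and Y
    (A : ℕ → Submodule R X) (B : ℕ → Submodule R Y)
    [DirectSum.Decomposition A] [DirectSum.Decomposition B]
    -- the differentials
    (dX : X →ₗ[R] X) (dY : Y →ₗ[R] Y)
    (hdX2 : dX ∘ₗ dX = 0) (hdY2 : dY ∘ₗ dY = 0)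
    (hdXdeg : ∀ n : ℕ, ∀ x ∈ A (n + 1), dX x ∈ A n)
    (hdX0 : ∀ x ∈ A 0, dX x = 0)
    (hdYdeg : ∀ n : ℕ, ∀ y ∈ B (n + 1), dY y ∈ B n)
    (hdY0 : ∀ y ∈ B 0, dY y = 0)
    -- the dg algebra structure on X : bilinear, unital, associative product
    -- compatible with the grading and satisfying the Leibniz rule
    (mul : X →ₗ[R] X →ₗ[R] X) (one : X) (hone : one ∈ A 0)
    (hone_l : ∀ x, mul one x = x) (hone_r : ∀ x, mul x one = x)
    (hassoc : ∀ x y z : X, mul (mul x y) z = mul x (mul y z))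
    (hmuldeg : ∀ m n : ℕ, ∀ x ∈ A m, ∀ y ∈ A n, mul x y ∈ A (m + n))
    (hLeib : ∀ m : ℕ, ∀ x ∈ A m, ∀ y : X,
      dX (mul x y) = mul (dX x) y + ((-1 : ℤ) ^ m) • mul x (dX y))
    -- the deformation retract (i, p, h)
    (i : Y →ₗ[R] X) (p : X →ₗ[R] Y) (h : X →ₗ[R] X)
    (hichain : dX ∘ₗ i = i ∘ₗ dY) (hpchain : dY ∘ₗ p = p ∘ₗ dX)
    (hideg : ∀ n : ℕ, ∀ y ∈ B n, i y ∈ A n)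
    (hpdeg : ∀ n : ℕ, ∀ x ∈ A n, p x ∈ B n)
    (hhdeg : ∀ n : ℕ, ∀ x ∈ A n, h x ∈ A (n + 1))
    (hpi : p ∘ₗ i = LinearMap.id)
    (hip : i ∘ₗ p = LinearMap.id + dX ∘ₗ h + h ∘ₗ dX)
    -- h satisfies the generalized Leibniz rule : h(ab) ∈ h(a)·X + X·h(b)
    (hgen : ∀ a b : X, ∃ u v : X, h (mul a b) = mul (h a) u + mul v (h b))
    -- h ∘ i = 0
    (hhi : h ∘ₗ i = 0) :
    -- the product α·β := p (i α · i β) on Y is associative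
    ∀ α β γ : Y,
      p (mul (i (p (mul (i α) (i β)))) (i γ)) =
        p (mul (i α) (i (p (mul (i β) (i γ))))) :=
  descended_product_associative_general A B dX dY mul hassoc hLeib i p h hichain hideg hip hgen hhi
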